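/- arXiv:2404.08791 — 2 statements merged into one kernel-verified Lean document; each statement's English description precedes it below -/
import Mathlib

section
/- There exist two finite MDP domains over the same states and actions, together with an expectation set, for which a human-sufficient reward function exists and yet every reward function that is human-sufficient is misspecified. Concretely, let S = {0, 1, 2}, A = {a1, a2}, γ ∈ (0,1), initial state s0 = 0. Let the human domain D^H have deterministic transitions: from state 0, action a1 leads to state 1 and action a2 leads to state 2; states 1 and 2 are absorbing (every action loops back to the same state). Let the robot domain D^R be identical except that from state 0 both actions a1 and a2 lead to state 2. Let the expectation set be E = {({1}, >, 0), ({2}, =, 0)}. Then: (i) there exists a reward function r : S × A → ℝ that is human-sufficient for D^H and E; and (ii) for every reward function r : S × A → ℝ, there exists an optimal occupancy x for (D^R, r) with x(1) = 0, so in particular every reward that is human-sufficient for D^H and E is misspecified with respect to D^R and E. -/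
/-!
In `D^R` nothing leads to state 0 and only state 1 itself leads to state 1, while the total
discounted mass is always `1/(1-γ)`; so every occupancy has state occupancy `(1, 0, γ/(1-γ))`.
With the state occupancy forced, a deterministic policy that is greedy for `r` in every state
is optimal, and it violates `({1}, >, 0)` whatever `r` is. In `D^H`, rewarding only `(0, a1)`
forces every optimal occupancy to put all of the unit mass of state 0 on `a1`: state 2 is then
never entered, and state 1 collects `γ/(1-γ) > 0`.
-/

open Finset

/-- A finite MDP domain `D = ⟨S, A, T, γ, s0⟩`. -/
structure MDPDomain (S A : Type) [Fintype S] [Fintype A] : Type where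
  T : S → A → S → ℝ
  γ : ℝ
  s0 : S
  T_nonneg : ∀ s a s', 0 ≤ T s a s'
  T_sum : ∀ s a, ∑ s', T s a s' = 1
  γ_nonneg : 0 ≤ γ
  γ_lt_one : γ < 1

variable {S A : Type} [Fintype S] [Fintype A] [DecidableEq S]

/-- Membership in the occupancy polytope `F(D)`. -/
def InOcc (D : MDPDomain S A) (x : S → A → ℝ) : Prop :=
  (∀ s a, 0 ≤ x s a) ∧
  ∀ s, ∑ a, x s a =
    (if s = D.s0 then (1 : ℝ) else 0) + D.γ * ∑ s', ∑ a', x s' a' * D.T s' a' s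

/-- State occupancy `x(s) = ∑_a x(s,a)`. -/
def stateOcc (x : S → A → ℝ) (s : S) : ℝ := ∑ a, x s a

/-- Value of an occupancy under reward `r`. -/
def val (x : S → A → ℝ) (r : S → A → ℝ) : ℝ := ∑ s, ∑ a, x s a * r s a

/-- `x` is an optimal occupancy for `(D, r)`. -/
def IsOptimal (D : MDPDomain S A) (r : S → A → ℝ) (x : S → A → ℝ) : Prop :=
  InOcc D x ∧ ∀ y, InOcc D y → val y r ≤ val x r

/-- Relational operators `{<, >, ≤, ≥, =}`. -/
inductive RelOp | lt | gt | le | ge | eq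

def RelOp.holds : RelOp → ℝ → ℝ → Prop
  | .lt, a, b => a < b
  | .gt, a, b => a > b
  | .le, a, b => a ≤ b
  | .ge, a, b => a ≥ b
  | .eq, a, b => a = b

/-- An expectation element `e = ⟨S_e, O, k⟩`. -/
structure ExpElem (S : Type) [Fintype S] where
  Se : Finset S
  op : RelOp
  k : ℝ

/-- `x` satisfies the expectation element `e`. -/
def Satisfies (x : S → A → ℝ) (e : ExpElem S) : Prop :=
  e.op.holds (∑ s ∈ e.Se, stateOcc x s) e.k

/-- `r` is human-sufficient for domain `D` and expectation set `E`. -/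
def HumanSufficient (D : MDPDomain S A) (E : Set (ExpElem S)) (r : S → A → ℝ) : Prop :=
  ∀ x, IsOptimal D r x → ∀ e ∈ E, Satisfies x e

/-- `r` is misspecified with respect to domain `D` and expectation set `E`. -/
def Misspecified (D : MDPDomain S A) (E : Set (ExpElem S)) (r : S → A → ℝ) : Prop :=
  ∃ x, IsOptimal D r x ∧ ∃ e ∈ E, ¬ Satisfies x e

/-- Deterministic transition function induced by a next-state map. -/
def detT {S A : Type} [Fintype S] [Fintype A] [DecidableEq S] (f : S → A → S) :
    S → A → S → ℝ := fun s a s' => if s' = f s a then 1 else 0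

lemma detT_nonneg {S A : Type} [Fintype S] [Fintype A] [DecidableEq S] (f : S → A → S) :
    ∀ s a s', 0 ≤ detT f s a s' := by
  intro s a s'; unfold detT; split <;> norm_num

lemma detT_sum {S A : Type} [Fintype S] [Fintype A] [DecidableEq S] (f : S → A → S) :
    ∀ s a, ∑ s', detT f s a s' = 1 := by
  intro s a; simp [detT]

/-- The human domain: from state 0, action 0 leads to state 1 and action 1 leads to
state 2; states 1 and 2 are absorbing. -/
def DH (γ : ℝ) (h0 : 0 < γ) (h1 : γ < 1) : MDPDomain (Fin 3) (Fin 2) where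
  T := detT (fun s a => if s = 0 then (if a = 0 then 1 else 2) else s)
  γ := γ
  s0 := 0
  T_nonneg := detT_nonneg _
  T_sum := detT_sum _
  γ_nonneg := h0.le
  γ_lt_one := h1

/-- The robot domain: identical, except both actions from state 0 lead to state 2. -/
def DR (γ : ℝ) (h0 : 0 < γ) (h1 : γ < 1) : MDPDomain (Fin 3) (Fin 2) where
  T := detT (fun s _ => if s = 0 then 2 else s)
  γ := γ
  s0 := 0
  T_nonneg := detT_nonneg _
  T_sum := detT_sum _
  γ_nonneg := h0.le
  γ_lt_one := h1

/-- The expectation set E = {({1}, >, 0), ({2}, =, 0)}. -/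
def Eset : Set (ExpElem (Fin 3)) := {⟨{1}, .gt, 0⟩, ⟨{2}, .eq, 0⟩}

namespace InOcc

variable {D : MDPDomain S A} {x : S → A → ℝ}

lemma stateOcc_nonneg (hx : InOcc D x) (s : S) : 0 ≤ stateOcc x s :=
  sum_nonneg fun a _ => hx.1 s a

lemma stateOcc_eq (hx : InOcc D x) (s : S) :
    stateOcc x s =
      (if s = D.s0 then 1 else 0) + D.γ * ∑ s', ∑ a', x s' a' * D.T s' a' s :=
  hx.2 s

/-- Summing the flow equations over all states: every row of `T` sums to one, so the total
mass satisfies `M = 1 + γ M`. -/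
lemma one_sub_γ_mul_sum_stateOcc (hx : InOcc D x) :
    (1 - D.γ) * ∑ s, stateOcc x s = 1 := by
  have hinflow : ∑ s, ∑ s', ∑ a', x s' a' * D.T s' a' s = ∑ s, stateOcc x s := by
    rw [sum_comm]
    refine sum_congr rfl fun s' _ => ?_
    rw [sum_comm]
    simp only [← mul_sum, D.T_sum, mul_one, stateOcc]
  have hsum : ∑ s, stateOcc x s = 1 + D.γ * ∑ s, stateOcc x s := by
    conv_lhs => rw [sum_congr rfl fun s _ => hx.stateOcc_eq s]
    rw [sum_add_distrib, ← mul_sum, hinflow]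
    simp
  linarith

lemma stateOcc_s0 (hx : InOcc D x) (hin : ∀ s a, D.T s a D.s0 = 0) :
    stateOcc x D.s0 = 1 := by
  simp [hx.stateOcc_eq, hin]

/-- A state other than `s0` that receives no mass from other states keeps none: it can only
feed itself, and discounting makes `x(s) ≤ γ x(s)`. -/
lemma stateOcc_eq_zero_of_inflow_eq_zero {s : S} (hx : InOcc D x) (hs : s ≠ D.s0)
    (hin : ∀ s' ≠ s, ∀ a, x s' a * D.T s' a s = 0) : stateOcc x s = 0 := by
  have hself : stateOcc x s = D.γ * ∑ a, x s a * D.T s a s := by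
    rw [hx.stateOcc_eq, if_neg hs, zero_add,
      sum_eq_single s (fun s' _ hs' => sum_eq_zero fun a _ => hin s' hs' a) (by simp)]
  have hT : ∀ a, D.T s a s ≤ 1 := fun a =>
    D.T_sum s a ▸ single_le_sum (fun t _ => D.T_nonneg s a t) (mem_univ s)
  have hle : ∑ a, x s a * D.T s a s ≤ stateOcc x s :=
    sum_le_sum fun a _ => mul_le_of_le_one_right (hx.1 s a) (hT a)
  have := hx.stateOcc_nonneg s
  nlinarith [D.γ_nonneg, D.γ_lt_one]

end InOcc

lemma val_le_sum_stateOcc_mul {S A : Type} [Fintype S] [Fintype A] {x r : S → A → ℝ}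
    {c : S → ℝ} (hx : ∀ s a, 0 ≤ x s a) (hr : ∀ s a, r s a ≤ c s) :
    val x r ≤ ∑ s, stateOcc x s * c s := by
  simp only [_root_.val, stateOcc, sum_mul]
  exact sum_le_sum fun s _ => sum_le_sum fun a _ => mul_le_mul_of_nonneg_left (hr s a) (hx s a)

lemma val_indicator [DecidableEq A] (x : S → A → ℝ) (s₁ : S) (a₁ : A) :
    val x (fun s a => if s = s₁ ∧ a = a₁ then 1 else 0) = x s₁ a₁ := by
  simp [_root_.val, ite_and]

/-- `m` is meant to be the state occupancy of the deterministic policy `π`; the result lies in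
`F(D)` exactly when `m` solves the flow equations of `π` (`inOcc_detOcc`). -/
def detOcc {S A : Type} [DecidableEq A] (π : S → A) (m : S → ℝ) : S → A → ℝ :=
  fun s a => if a = π s then m s else 0

lemma sum_detOcc_mul {S A : Type} [Fintype A] [DecidableEq A] (π : S → A) (m : S → ℝ) (s : S)
    (f : A → ℝ) : ∑ a, detOcc π m s a * f a = m s * f (π s) := by
  simp [detOcc]

lemma stateOcc_detOcc {S A : Type} [Fintype A] [DecidableEq A] (π : S → A) (m : S → ℝ)
    (s : S) : stateOcc (detOcc π m) s = m s := by
  simpa [stateOcc] using sum_detOcc_mul π m s 1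

lemma val_detOcc {S A : Type} [Fintype S] [Fintype A] [DecidableEq A] (π : S → A)
    (m : S → ℝ) (r : S → A → ℝ) : val (detOcc π m) r = ∑ s, m s * r s (π s) := by
  simp only [_root_.val, sum_detOcc_mul]

section DetOcc

variable [DecidableEq A] {D : MDPDomain S A} {π : S → A} {m : S → ℝ}

lemma inOcc_detOcc (hm : ∀ s, 0 ≤ m s)
    (hflow : ∀ s, m s = (if s = D.s0 then 1 else 0) + D.γ * ∑ s', m s' * D.T s' (π s') s) :
    InOcc D (detOcc π m) := by
  refine ⟨fun s a => ?_, fun s => ?_⟩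
  · unfold detOcc; split_ifs <;> simp [hm]
  · change stateOcc (detOcc π m) s = _
    simpa only [stateOcc_detOcc, sum_detOcc_mul] using hflow s

lemma isOptimal_detOcc {r : S → A → ℝ} (hx : InOcc D (detOcc π m))
    (hforced : ∀ y, InOcc D y → stateOcc y = m) (hπ : ∀ s a, r s a ≤ r s (π s)) :
    IsOptimal D r (detOcc π m) := by
  refine ⟨hx, fun y hy => (val_le_sum_stateOcc_mul hy.1 hπ).trans_eq ?_⟩
  rw [hforced y hy, val_detOcc]

end DetOcc

lemma forall_mem_Eset_satisfies_iff (x : Fin 3 → Fin 2 → ℝ) :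
    (∀ e ∈ Eset, Satisfies x e) ↔ 0 < stateOcc x 1 ∧ stateOcc x 2 = 0 := by
  simp [Eset, Satisfies, RelOp.holds]

/-- `γ / (1 - γ) = γ + γ² + ⋯` is the mass an absorbing state collects when entered at time 1. -/
lemma mul_one_add_div_one_sub {γ : ℝ} (h1 : γ < 1) : γ * (1 + γ / (1 - γ)) = γ / (1 - γ) := by
  field_simp [sub_ne_zero.2 h1.ne']
  ring

section Example

variable {γ : ℝ} (h0 : 0 < γ) (h1 : γ < 1)

lemma stateOcc_of_inOcc_DR {y : Fin 3 → Fin 2 → ℝ} (hy : InOcc (DR γ h0 h1) y) :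
    stateOcc y = ![1, 0, γ / (1 - γ)] := by
  have hy0 : stateOcc y 0 = 1 := hy.stateOcc_s0 fun s a => by fin_cases s <;> simp [DR, detT]
  have hy1 : stateOcc y 1 = 0 := hy.stateOcc_eq_zero_of_inflow_eq_zero (by simp [DR])
    fun s hs a => by fin_cases s <;> simp_all [DR, detT]
  have htotal := hy.one_sub_γ_mul_sum_stateOcc
  rw [Fin.sum_univ_three, hy0, hy1] at htotal
  ext s
  fin_cases s
  · exact hy0
  · exact hy1
  · simp only [DR] at htotal
    simp only [Fin.reduceFinMk, Matrix.cons_val, eq_div_iff (sub_ne_zero.2 h1.ne')]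
    linarith

lemma exists_isOptimal_DR (r : Fin 3 → Fin 2 → ℝ) :
    ∃ x, IsOptimal (DR γ h0 h1) r x := by
  choose π hπ using fun s => Finite.exists_max (r s)
  have hm : ∀ s, 0 ≤ ![1, 0, γ / (1 - γ)] s := fun s => by
    fin_cases s <;> simp [div_nonneg h0.le (sub_nonneg.2 h1.le)]
  have hflow : InOcc (DR γ h0 h1) (detOcc π ![1, 0, γ / (1 - γ)]) :=
    inOcc_detOcc hm fun s => by
      fin_cases s <;> simp [DR, detT, Fin.sum_univ_three, mul_one_add_div_one_sub h1]
  exact ⟨_, isOptimal_detOcc hflow (fun y hy => stateOcc_of_inOcc_DR h0 h1 hy) hπ⟩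

lemma inOcc_DH_detOcc :
    InOcc (DH γ h0 h1) (detOcc (fun _ => 0) ![1, γ / (1 - γ), 0]) := by
  refine inOcc_detOcc (fun s => ?_) fun s => ?_
  · fin_cases s <;> simp [div_nonneg h0.le (sub_nonneg.2 h1.le)]
  · fin_cases s <;> simp [DH, detT, Fin.sum_univ_three, mul_one_add_div_one_sub h1]

lemma humanSufficient_DH :
    HumanSufficient (DH γ h0 h1) Eset (fun s a => if s = 0 ∧ a = 0 then 1 else 0) := by
  rintro x ⟨hx, hopt⟩
  rw [forall_mem_Eset_satisfies_iff]
  have hx0 : stateOcc x 0 = 1 :=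
    hx.stateOcc_s0 fun s a => by fin_cases s <;> fin_cases a <;> simp [DH, detT]
  have hx00 : 1 ≤ x 0 0 := by
    simpa [val_indicator, detOcc] using hopt _ (inOcc_DH_detOcc h0 h1)
  have hx01 : x 0 1 = 0 := by
    rw [stateOcc, Fin.sum_univ_two] at hx0
    exact le_antisymm (by linarith) (hx.1 0 1)
  have hx2 : stateOcc x 2 = 0 := hx.stateOcc_eq_zero_of_inflow_eq_zero (by simp [DH])
    fun s hs a => by fin_cases s <;> fin_cases a <;> simp_all [DH, detT]
  have htotal := hx.one_sub_γ_mul_sum_stateOcc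
  rw [Fin.sum_univ_three, hx0, hx2] at htotal
  have : (1 - γ) * stateOcc x 1 = γ := by simp only [DH] at htotal; linarith
  exact ⟨pos_of_mul_pos_right (this.symm ▸ h0) (sub_nonneg.2 h1.le), hx2⟩

end Example

theorem no_reward_exists (γ : ℝ) (h0 : 0 < γ) (h1 : γ < 1) :
    (∃ r : Fin 3 → Fin 2 → ℝ, HumanSufficient (DH γ h0 h1) Eset r) ∧
    (∀ r : Fin 3 → Fin 2 → ℝ,
      ∃ x : Fin 3 → Fin 2 → ℝ, IsOptimal (DR γ h0 h1) r x ∧ stateOcc x 1 = 0) ∧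
    (∀ r : Fin 3 → Fin 2 → ℝ,
      HumanSufficient (DH γ h0 h1) Eset r → Misspecified (DR γ h0 h1) Eset r) := by
  have hR : ∀ r : Fin 3 → Fin 2 → ℝ,
      ∃ x, IsOptimal (DR γ h0 h1) r x ∧ stateOcc x 1 = 0 := fun r => by
    obtain ⟨x, hx⟩ := exists_isOptimal_DR h0 h1 r
    exact ⟨x, hx, congrFun (stateOcc_of_inOcc_DR h0 h1 hx.1) 1⟩
  refine ⟨⟨_, humanSufficient_DH h0 h1⟩, hR, fun r _ => ?_⟩
  obtain ⟨x, hx, hx1⟩ := hR r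
  refine ⟨x, hx, ?_⟩
  by_contra! hsat
  exact ((forall_mem_Eset_satisfies_iff x).1 hsat).1.ne' hx1
end

section
/- For any finite MDP domain D and any deterministic stationary policy π : S → A, there exists exactly one element x of the occupancy polytope F(D) with x(s,a) = 0 for every state s and every action a ≠ π(s). (In particular, the occupancy polytope F(D) is nonempty.) -/
open Finset

variable {S A : Type} [Fintype S] [Fintype A] [DecidableEq S]

/-!
A policy-supported `x` is determined by its state occupancy `μ s = x s (π s)`, and the flow
constraints of `F(D)` become the linear system `μ (1 - γ P) = e_{s₀}`, where `P` is the
row-stochastic transition matrix of `π`. Since `P` preserves total mass and `γ < 1`, the operator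
`1 - γ P` is inverse-positive: if `μ (1 - γ P) ≥ 0`, the negative part `f` of `μ` satisfies
`f ≤ γ f P`, so `∑ f ≤ γ ∑ f` and `f = 0`. Applied to `±(μ - ν)` this gives injectivity, hence
bijectivity in finite dimension, and applied to the unique solution it gives `μ ≥ 0`.
-/

namespace Matrix

variable {n K : Type*} [Fintype n] [DecidableEq n] [Field K] {P : Matrix n n K} {γ : K}

theorem vecMul_one_sub_smul (μ : n → K) : μ ᵥ* (1 - γ • P) = μ - γ • (μ ᵥ* P) := by
  rw [vecMul_sub, vecMul_one, vecMul_smul]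

variable [LinearOrder K] [IsStrictOrderedRing K]

theorem sum_vecMul_of_mem_rowStochastic (hP : P ∈ rowStochastic K n) (f : n → K) :
    ∑ j, (f ᵥ* P) j = ∑ i, f i := by
  rw [← dotProduct_one, ← dotProduct_one, ← dotProduct_mulVec, one_vecMul_of_mem_rowStochastic hP]

theorem vecMul_mono_of_mem_rowStochastic (hP : P ∈ rowStochastic K n) {f g : n → K}
    (h : f ≤ g) : f ᵥ* P ≤ g ᵥ* P := by
  intro j
  have := nonneg_vecMul_of_mem_rowStochastic hP (x := g - f) (fun i => sub_nonneg.2 (h i)) j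
  rwa [sub_vecMul, Pi.sub_apply, sub_nonneg] at this

theorem eq_zero_of_nonneg_of_le_smul_vecMul (hP : P ∈ rowStochastic K n) (hγ : γ < 1)
    {f : n → K} (hf : 0 ≤ f) (h : f ≤ γ • (f ᵥ* P)) : f = 0 := by
  have hsum_nonneg : 0 ≤ ∑ i, f i := Finset.sum_nonneg fun i _ => hf i
  have hsum_le : ∑ i, f i ≤ γ * ∑ i, f i := calc
    ∑ i, f i ≤ ∑ i, γ * (f ᵥ* P) i := Finset.sum_le_sum fun i _ => h i
    _ = γ * ∑ i, f i := by rw [← Finset.mul_sum, sum_vecMul_of_mem_rowStochastic hP]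
  have hsum : ∑ i, f i = 0 := by nlinarith
  exact (Fintype.sum_eq_zero_iff_of_nonneg hf).1 hsum

theorem nonneg_of_smul_vecMul_le (hP : P ∈ rowStochastic K n) (hγ₀ : 0 ≤ γ) (hγ₁ : γ < 1)
    {μ : n → K} (h : γ • (μ ᵥ* P) ≤ μ) : 0 ≤ μ := by
  have hneg : μ⁻ ≤ γ • (μ⁻ ᵥ* P) := by
    rw [negPart_def]
    refine sup_le ?_ (smul_nonneg hγ₀ (nonneg_vecMul_of_mem_rowStochastic hP (negPart_nonneg μ)))
    calc -μ ≤ -(γ • (μ ᵥ* P)) := neg_le_neg h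
      _ = γ • (-μ ᵥ* P) := by rw [neg_vecMul, smul_neg]
      _ ≤ γ • (μ⁻ ᵥ* P) :=
        smul_le_smul_of_nonneg_left (vecMul_mono_of_mem_rowStochastic hP (neg_le_negPart μ)) hγ₀
  exact negPart_eq_zero.1 (eq_zero_of_nonneg_of_le_smul_vecMul hP hγ₁ (negPart_nonneg μ) hneg)

theorem nonneg_of_nonneg_vecMul_one_sub_smul (hP : P ∈ rowStochastic K n) (hγ₀ : 0 ≤ γ)
    (hγ₁ : γ < 1) {μ : n → K} (h : 0 ≤ μ ᵥ* (1 - γ • P)) : 0 ≤ μ :=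
  nonneg_of_smul_vecMul_le hP hγ₀ hγ₁ (by rwa [vecMul_one_sub_smul, sub_nonneg] at h)

theorem vecMul_one_sub_smul_bijective (hP : P ∈ rowStochastic K n) (hγ₀ : 0 ≤ γ)
    (hγ₁ : γ < 1) : Function.Bijective fun μ : n → K => μ ᵥ* (1 - γ • P) := by
  have hinj : Function.Injective fun μ : n → K => μ ᵥ* (1 - γ • P) := by
    intro μ ν hμν
    have hd : (μ - ν) ᵥ* (1 - γ • P) = 0 := by
      simp only at hμν
      rw [sub_vecMul, hμν, sub_self]
    have h₁ := nonneg_of_nonneg_vecMul_one_sub_smul hP hγ₀ hγ₁ hd.ge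
    have h₂ := nonneg_of_nonneg_vecMul_one_sub_smul hP hγ₀ hγ₁
      (by rw [neg_vecMul, hd, neg_zero] : (0 : n → K) ≤ -(μ - ν) ᵥ* (1 - γ • P))
    exact sub_eq_zero.1 (le_antisymm (neg_nonneg.1 h₂) h₁)
  exact ⟨hinj, vecMul_surjective_iff_isUnit.2 (vecMul_injective_iff_isUnit.1 hinj)⟩

end Matrix

section PolicyOccupancy

open Matrix

namespace MDPDomain

omit [DecidableEq S] in
def policyKernel (D : MDPDomain S A) (π : S → A) : Matrix S S ℝ :=
  of fun s s' => D.T s (π s) s'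

theorem policyKernel_mem_rowStochastic (D : MDPDomain S A) (π : S → A) :
    D.policyKernel π ∈ rowStochastic ℝ S :=
  mem_rowStochastic_iff_sum.2 ⟨fun _ _ => D.T_nonneg _ _ _, fun _ => D.T_sum _ _⟩

end MDPDomain

variable [DecidableEq A]

omit [Fintype S] [Fintype A] [DecidableEq S] in
def policyOcc (π : S → A) (μ : S → ℝ) : S → A → ℝ :=
  fun s a => if a = π s then μ s else 0

omit [Fintype S] [Fintype A] [DecidableEq S] in
theorem policyOcc_of_ne {π : S → A} {s : S} {a : A} (μ : S → ℝ) (h : a ≠ π s) :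
    policyOcc π μ s a = 0 :=
  if_neg h

omit [Fintype S] [Fintype A] [DecidableEq S] in
theorem eq_policyOcc_of_forall_ne {π : S → A} {x : S → A → ℝ}
    (hx : ∀ s a, a ≠ π s → x s a = 0) : x = policyOcc π fun s => x s (π s) := by
  funext s a
  by_cases ha : a = π s
  · rw [policyOcc, if_pos ha, ha]
  · rw [policyOcc_of_ne _ ha, hx s a ha]

omit [Fintype S] [DecidableEq S] in
theorem sum_policyOcc_mul (π : S → A) (μ : S → ℝ) (s : S) (f : A → ℝ) :
    ∑ a, policyOcc π μ s a * f a = μ s * f (π s) := by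
  simp [policyOcc, ite_mul]

theorem inOcc_policyOcc_iff (D : MDPDomain S A) (π : S → A) (μ : S → ℝ) :
    InOcc D (policyOcc π μ) ↔
      0 ≤ μ ∧ μ ᵥ* (1 - D.γ • D.policyKernel π) = fun s => if s = D.s0 then 1 else 0 := by
  have hsum (s : S) : ∑ a, policyOcc π μ s a = μ s := by
    simpa using sum_policyOcc_mul π μ s 1
  have hflow (s : S) :
      ∑ s', ∑ a', policyOcc π μ s' a' * D.T s' a' s = (μ ᵥ* D.policyKernel π) s := by
    simp only [sum_policyOcc_mul, vecMul, dotProduct, MDPDomain.policyKernel, of_apply]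
  refine and_congr ⟨fun h s => by simpa [policyOcc] using h s (π s), fun h s a => ?_⟩ ?_
  · unfold policyOcc
    split_ifs
    exacts [h s, le_rfl]
  · rw [vecMul_one_sub_smul, sub_eq_iff_eq_add, funext_iff]
    simp only [hsum, hflow, Pi.add_apply, Pi.smul_apply, smul_eq_mul]

end PolicyOccupancy

theorem deterministic_policy_unique_occupancy
    {S A : Type} [Fintype S] [Fintype A] [DecidableEq S] [DecidableEq A]
    (D : MDPDomain S A) (π : S → A) :
    ∃! x : S → A → ℝ, InOcc D x ∧ ∀ s, ∀ a, a ≠ π s → x s a = 0 := by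
  have hK := D.policyKernel_mem_rowStochastic π
  obtain ⟨μ, hμ, hμ_unique⟩ :=
    (Matrix.vecMul_one_sub_smul_bijective hK D.γ_nonneg D.γ_lt_one).existsUnique
      fun s => if s = D.s0 then 1 else 0
  have hμ_nonneg : 0 ≤ μ :=
    Matrix.nonneg_of_nonneg_vecMul_one_sub_smul hK D.γ_nonneg D.γ_lt_one
      (by rw [hμ]; intro s; dsimp only [Pi.zero_apply]; split_ifs <;> norm_num)
  refine ⟨policyOcc π μ, ⟨(inOcc_policyOcc_iff D π μ).2 ⟨hμ_nonneg, hμ⟩,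
    fun s a => policyOcc_of_ne μ⟩, ?_⟩
  rintro y ⟨hy, hy_supp⟩
  rw [eq_policyOcc_of_forall_ne hy_supp] at hy ⊢
  rw [hμ_unique _ ((inOcc_policyOcc_iff D π _).1 hy).2]
end
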